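/- arXiv:1501.07131 — 3 statements merged into one kernel-verified Lean document; each statement's English description precedes it below -/
import Mathlib

section
/- Every solvable consensus game acceptor admits a winning strategy implementable by a nondeterministic linear-bounded automaton. -/
/-! ## Consensus game acceptors (Berwanger–van den Bogaard).
A consensus game acceptor over an observation alphabet `Γ` is a finite graph
with an initial state, two observation labellings, and a nonempty set of
admissible decisions at each final (sink) state. -/
structure CGame (Γ : Type) where
  V : Type
  fintypeV : Fintype V
  E : V → V → Prop
  init : V
  β1 : V → Γ
  β2 : V → Γ
  Ω : V → Set Bool
  Ω_ne : ∀ v, (∀ u, ¬ E v u) → (Ω v).Nonempty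

namespace CGame

variable {Γ : Type} (G : CGame Γ)

/-- A final state has no outgoing transition. -/
def IsFinal (v : G.V) : Prop := ∀ u, ¬ G.E v u

/-- A play is a path `v₀ v₁ … v_{n+1}` from the initial state to a final state. -/
def IsPlay (π : List G.V) : Prop :=
  2 ≤ π.length ∧ π.head? = some G.init ∧ List.Chain' G.E π ∧
    ∀ v, π.getLast? = some v → G.IsFinal v

/-- Observation sequence of player 1 (interior states only). -/
def obs1 (π : List G.V) : List Γ := ((π.drop 1).dropLast).map G.β1

/-- Observation sequence of player 2 (interior states only). -/
def obs2 (π : List G.V) : List Γ := ((π.drop 1).dropLast).map G.β2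

/-- Admissible decisions `Ω(π)` at (the final state of) a play. -/
def OmegaP (π : List G.V) : Set Bool := {a | ∃ v, π.getLast? = some v ∧ a ∈ G.Ω v}

/-- Plays indistinguishable to player 1: `π ∼¹ π'`. -/
def Ind1 (π π' : List G.V) : Prop := G.IsPlay π ∧ G.IsPlay π' ∧ G.obs1 π = G.obs1 π'

/-- Plays indistinguishable to player 2: `π ∼² π'`. -/
def Ind2 (π π' : List G.V) : Prop := G.IsPlay π ∧ G.IsPlay π' ∧ G.obs2 π = G.obs2 π'

/-- Connected plays: `π ∼* π'` (alternating chains of `∼¹` and `∼²`). -/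
def Connected : List G.V → List G.V → Prop :=
  Relation.ReflTransGen (fun π π' => G.Ind1 π π' ∨ G.Ind2 π π')

/-- A (state-based) strategy of player 1: invariant under `∼¹`. -/
def Strategy1 (s : List G.V → Bool) : Prop := ∀ π π', G.Ind1 π π' → s π = s π'

/-- A (state-based) strategy of player 2: invariant under `∼²`. -/
def Strategy2 (s : List G.V → Bool) : Prop := ∀ π π', G.Ind2 π π' → s π = s π'

/-- A joint strategy is winning if on every play the two decisions agree and
are admissible. -/
def JointWinning (s1 s2 : List G.V → Bool) : Prop :=
  G.Strategy1 s1 ∧ G.Strategy2 s2 ∧ ∀ π, G.IsPlay π → s1 π = s2 π ∧ s1 π ∈ G.OmegaP π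

/-- A game is solvable if it admits a joint winning strategy. -/
def Solvable : Prop := ∃ s1 s2, G.JointWinning s1 s2

/-- An observation-based strategy `t : Γ* → Bool` of player 1 is winning if it is
the first component of a joint winning strategy. -/
def ObsWinning (t : List Γ → Bool) : Prop :=
  ∃ t2 : List Γ → Bool, G.JointWinning (fun π => t (G.obs1 π)) (fun π => t2 (G.obs2 π))

/-- A decision `a` is safe at a play `π` if it is admissible at every connected play. -/
def Safe (a : Bool) (π : List G.V) : Prop :=
  ∀ π', G.IsPlay π' → G.Connected π π' → a ∈ G.OmegaP π'

/-- Seed relation: pairs of observation sequences of the two players on plays. -/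
def seedRel : Set (List Γ × List Γ) :=
  {p | ∃ π, G.IsPlay π ∧ p.1 = G.obs1 π ∧ p.2 = G.obs2 π}

/-- Seed language `L_acc`: player-1 observations of plays with `Ω(π) = {1}`. -/
def LaccSet : Set (List Γ) := {w | ∃ π, G.IsPlay π ∧ G.obs1 π = w ∧ G.OmegaP π = {true}}

/-- Seed language `L_rej`: player-1 observations of plays with `Ω(π) = {0}`. -/
def LrejSet : Set (List Γ) := {w | ∃ π, G.IsPlay π ∧ G.obs1 π = w ∧ G.OmegaP π = {false}}

end CGame

/-- Words over the subalphabet `S`. -/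
def WordsIn {Γ : Type} (S : Set Γ) : Set (List Γ) := {w | ∀ a ∈ w, a ∈ S}

/-- `G` covers `L` over the terminal alphabet `S`: `G` is solvable, some winning
strategy defines exactly `L` on `S`-words, and every winning strategy accepts `L`. -/
def CGame.Covers {Γ : Type} (G : CGame Γ) (S : Set Γ) (L : Set (List Γ)) : Prop :=
  G.Solvable ∧
  (∃ t, G.ObsWinning t ∧ ∀ w ∈ WordsIn S, (w ∈ L ↔ t w = true)) ∧
  (∀ t, G.ObsWinning t → ∀ w ∈ L, t w = true)

/-- `G` characterises `L` over `S`: solvable and every winning strategy defines `L`. -/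
def CGame.Characterises {Γ : Type} (G : CGame Γ) (S : Set Γ) (L : Set (List Γ)) : Prop :=
  G.Solvable ∧ ∀ t, G.ObsWinning t → ∀ w ∈ WordsIn S, (w ∈ L ↔ t w = true)

/-! ## Context-sensitive (noncontracting) grammars. -/

/-- One derivation step of a grammar with rule set `P`. -/
def GrammarStep {N T : Type} (P : Set (List (N ⊕ T) × List (N ⊕ T)))
    (u v : List (N ⊕ T)) : Prop :=
  ∃ x y l r, (l, r) ∈ P ∧ u = x ++ l ++ y ∧ v = x ++ r ++ y

/-- A language is context-sensitive if, apart from the empty word, it is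
generated by a finite noncontracting (monotone) grammar. -/
def ContextSensitive {T : Type} (L : Set (List T)) : Prop :=
  ∃ (N : Type) (_ : Finite N) (S : N) (P : Set (List (N ⊕ T) × List (N ⊕ T))),
    P.Finite ∧
    (∀ p ∈ P, p.1 ≠ [] ∧ p.1.length ≤ p.2.length ∧ ∃ x ∈ p.1, ∃ n : N, x = Sum.inl n) ∧
    ∀ w : List T, w ≠ [] →
      (w ∈ L ↔ Relation.ReflTransGen (GrammarStep P) [Sum.inl S] (w.map Sum.inr))

/-!
Call a play *accept-forced* if it is connected to a play `π'` with `Ω(π') = {1}`, and let each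
player decide `1` exactly on the observation sequences of accept-forced plays. Being accept-forced
is invariant under connection, so the two players agree on every play. A winning joint strategy is
constant on connected plays, so `1` is admissible on an accept-forced play; on any other play `0`
is admissible, as otherwise `Ω(π) = {1}`.

The accepted language is generated by a noncontracting grammar simulating a linear-bounded
automaton whose tape holds the interior states of a play: it guesses a path ending next to a final
state with `Ω = {1}`, repeatedly sweeps the row replacing it by one that one of the players cannot
tell apart from it, and finally emits the observations of player 1. Every grammar step is a step of
the automaton, because every left-hand side contains a head symbol and a sentential form contains
exactly one, so soundness reduces to an invariant of the automaton's configurations.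
-/

theorem List.eq_of_append_cons_eq_append_cons {α : Type*} {p : α → Prop} {x y L R : List α}
    {a b : α} (hL : ∀ c ∈ L, p c) (hR : ∀ c ∈ R, p c) (ha : ¬ p a)
    (h : x ++ a :: y = L ++ b :: R) : x = L ∧ a = b ∧ y = R := by
  rcases List.append_eq_append_iff.mp h with ⟨_ | ⟨c, as⟩, rfl, h'⟩ | ⟨_ | ⟨c, bs⟩, rfl, h'⟩
  · simp_all
  · obtain ⟨rfl, -⟩ := List.cons.inj h'
    exact absurd (hL a (by simp)) ha
  · simp_all
  · obtain ⟨rfl, rfl⟩ := List.cons.inj h'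
    exact absurd (hR a (by simp)) ha

theorem List.IsChain.append_singleton {α : Type*} {R : α → α → Prop} {l : List α} {x y : α}
    (h : List.IsChain R l) (hl : l.getLast? = some x) (hxy : R x y) : List.IsChain R (l ++ [y]) :=
  h.append (List.isChain_singleton y) (by simp [hl, hxy])

theorem List.isEmpty_append_singleton {α : Type*} (l : List α) (x : α) :
    (l ++ [x]).isEmpty = false := by
  simp

theorem List.getLast?_cons_append_singleton {α : Type*} (a x : α) (l : List α) :
    (a :: (l ++ [x])).getLast? = some x :=
  List.getLast?_concat (l := a :: l)

namespace CGame

variable {Γ : Type} (G : CGame Γ)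

/-! ### Accept-forced plays and the strategy -/

/-- Observation labelling of player 1 (`b = true`) or player 2 (`b = false`). -/
def βOf (b : Bool) : G.V → Γ := bif b then G.β1 else G.β2

def interior (π : List G.V) : List G.V := (π.drop 1).dropLast

lemma obs1_eq (π : List G.V) : G.obs1 π = (G.interior π).map G.β1 := rfl

def IndBy (b : Bool) (π π' : List G.V) : Prop :=
  G.IsPlay π ∧ G.IsPlay π' ∧ (G.interior π).map (G.βOf b) = (G.interior π').map (G.βOf b)

lemma ind_iff_exists_indBy {π π' : List G.V} :
    G.Ind1 π π' ∨ G.Ind2 π π' ↔ ∃ b, G.IndBy b π π' := by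
  constructor
  · rintro (h | h)
    exacts [⟨true, h⟩, ⟨false, h⟩]
  · rintro ⟨_ | _, h⟩
    exacts [Or.inr h, Or.inl h]

lemma IndBy.connected {G : CGame Γ} {b : Bool} {π π' : List G.V} (h : G.IndBy b π π') :
    G.Connected π π' :=
  .single ((G.ind_iff_exists_indBy).mpr ⟨b, h⟩)

lemma JointWinning.eq_of_connected {G : CGame Γ} {s₁ s₂ : List G.V → Bool}
    (hw : G.JointWinning s₁ s₂) {π π' : List G.V} (h : G.Connected π π') : s₁ π = s₁ π' := by
  induction h with
  | refl => rfl
  | tail _ hstep ih =>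
    refine ih.trans ?_
    rcases hstep with hst | hst
    · exact hw.1 _ _ hst
    · rw [(hw.2.2 _ hst.1).1, hw.2.1 _ _ hst, (hw.2.2 _ hst.2.1).1]

lemma omegaP_nonempty {π : List G.V} (hπ : G.IsPlay π) : (G.OmegaP π).Nonempty := by
  obtain ⟨hlen, -, -, hfin⟩ := hπ
  obtain ⟨v, hv⟩ : ∃ v, π.getLast? = some v :=
    ⟨_, List.getLast?_eq_some_getLast (List.ne_nil_of_length_pos (by omega))⟩
  obtain ⟨a, ha⟩ := G.Ω_ne v (hfin v hv)
  exact ⟨a, v, hv, ha⟩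

def AcceptForced (π : List G.V) : Prop :=
  ∃ π', G.IsPlay π' ∧ G.Connected π π' ∧ G.OmegaP π' = {true}

lemma AcceptForced.of_connected {G : CGame Γ} {π π' : List G.V} (h : G.Connected π π')
    (h' : G.AcceptForced π') : G.AcceptForced π :=
  let ⟨σ, hσ, hconn, hΩ⟩ := h'
  ⟨σ, hσ, h.trans hconn, hΩ⟩

lemma true_mem_omegaP_of_acceptForced (hsol : G.Solvable) {π : List G.V} (hπ : G.IsPlay π)
    (hacc : G.AcceptForced π) : true ∈ G.OmegaP π := by
  obtain ⟨s₁, s₂, hw⟩ := hsol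
  obtain ⟨π', hπ', hconn, hΩ⟩ := hacc
  have h' : s₁ π' ∈ G.OmegaP π' := (hw.2.2 _ hπ').2
  rw [hΩ, Set.mem_singleton_iff] at h'
  simpa [← h', hw.eq_of_connected hconn] using (hw.2.2 _ hπ).2

lemma false_mem_omegaP_of_not_acceptForced {π : List G.V} (hπ : G.IsPlay π)
    (hacc : ¬ G.AcceptForced π) : false ∈ G.OmegaP π := by
  by_contra hf
  refine hacc ⟨π, hπ, .refl, Set.eq_singleton_iff_nonempty_unique_mem.mpr
    ⟨G.omegaP_nonempty hπ, fun a ha => ?_⟩⟩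
  cases a
  · exact absurd ha hf
  · rfl

open Classical in
noncomputable def acceptStrategy (obs : List G.V → List Γ) (w : List Γ) : Bool :=
  decide (∃ π, G.IsPlay π ∧ obs π = w ∧ G.AcceptForced π)

lemma acceptStrategy_apply_eq_true_iff {obs : List G.V → List Γ} {b : Bool}
    (hobs : ∀ π π', G.IsPlay π → G.IsPlay π' → obs π = obs π' → G.IndBy b π π')
    {π : List G.V} (hπ : G.IsPlay π) :
    G.acceptStrategy obs (obs π) = true ↔ G.AcceptForced π := by
  simp only [acceptStrategy, decide_eq_true_eq]
  refine ⟨fun ⟨σ, hσ, hobsσ, hacc⟩ => ?_, fun h => ⟨π, hπ, rfl, h⟩⟩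
  exact hacc.of_connected (hobs π σ hπ hσ hobsσ.symm).connected

lemma acceptStrategy_obsWinning (hsol : G.Solvable) : G.ObsWinning (G.acceptStrategy G.obs1) := by
  refine ⟨G.acceptStrategy G.obs2, fun π π' h => congrArg _ h.2.2,
    fun π π' h => congrArg _ h.2.2, fun π hπ => ?_⟩
  have h₁ := G.acceptStrategy_apply_eq_true_iff (obs := G.obs1) (b := true)
    (fun _ _ h₁ h₂ h => ⟨h₁, h₂, h⟩) hπ
  have h₂ := G.acceptStrategy_apply_eq_true_iff (obs := G.obs2) (b := false)
    (fun _ _ h₁ h₂ h => ⟨h₁, h₂, h⟩) hπ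
  dsimp only
  by_cases hacc : G.AcceptForced π
  · rw [h₁.mpr hacc, h₂.mpr hacc]
    exact ⟨rfl, G.true_mem_omegaP_of_acceptForced hsol hπ hacc⟩
  · rw [Bool.eq_false_iff.mpr (mt h₁.mp hacc), Bool.eq_false_iff.mpr (mt h₂.mp hacc)]
    exact ⟨rfl, G.false_mem_omegaP_of_not_acceptForced hπ hacc⟩

lemma interior_cons_append (a : G.V) (vs : List G.V) (f : G.V) :
    G.interior (a :: vs ++ [f]) = vs := by
  simp [interior]

lemma omegaP_append_singleton (l : List G.V) (f : G.V) : G.OmegaP (l ++ [f]) = G.Ω f := by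
  simp [OmegaP]

lemma isPlay_init_cons_append {vs : List G.V} {f : G.V}
    (hch : List.IsChain G.E (G.init :: vs ++ [f])) (hf : G.IsFinal f) :
    G.IsPlay (G.init :: vs ++ [f]) :=
  ⟨by simp, by simp, hch, fun v hv => by
    rw [List.getLast?_concat, Option.some_inj] at hv
    exact hv ▸ hf⟩

lemma IsPlay.exists_eq {G : CGame Γ} {π : List G.V} (h : G.IsPlay π) :
    ∃ f, π = G.init :: G.interior π ++ [f] ∧ G.IsFinal f := by
  obtain ⟨hlen, hhead, -, hfin⟩ := h
  rcases π with _ | ⟨a, _ | ⟨b, rest⟩⟩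
  · simp at hlen
  · simp at hlen
  obtain rfl : a = G.init := by simpa using hhead
  refine ⟨(b :: rest).getLast (by simp), ?_, hfin _ (by simp [List.getLast?_eq_some_getLast])⟩
  simp [interior, List.dropLast_append_getLast]

def AcceptedInterior (vs : List G.V) : Prop :=
  ∃ π, G.IsPlay π ∧ G.interior π = vs ∧ G.AcceptForced π

lemma acceptedInterior_of_isChain {vs : List G.V} {f : G.V}
    (hch : List.IsChain G.E (G.init :: vs ++ [f])) (hf : G.IsFinal f) (hΩ : G.Ω f = {true}) :
    G.AcceptedInterior vs :=
  ⟨_, G.isPlay_init_cons_append hch hf, G.interior_cons_append .., _,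
    G.isPlay_init_cons_append hch hf, .refl, by rw [omegaP_append_singleton, hΩ]⟩

lemma AcceptedInterior.relabel {G : CGame Γ} {old new : List G.V} {f : G.V} {b : Bool}
    (h : G.AcceptedInterior old) (hch : List.IsChain G.E (G.init :: new ++ [f]))
    (hf : G.IsFinal f) (hobs : new.map (G.βOf b) = old.map (G.βOf b)) :
    G.AcceptedInterior new := by
  obtain ⟨π, hπ, rfl, hacc⟩ := h
  have hplay := G.isPlay_init_cons_append hch hf
  have hind : G.IndBy b _ π := ⟨hplay, hπ, by rwa [interior_cons_append]⟩
  exact ⟨_, hplay, G.interior_cons_append .., hacc.of_connected hind.connected⟩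

def HasFinalSucc (v : G.V) : Prop := ∃ f, G.E v f ∧ G.IsFinal f

def HasAcceptingSucc (v : G.V) : Prop := ∃ f, G.E v f ∧ G.IsFinal f ∧ G.Ω f = {true}

/-! ### A linear-bounded automaton for the accept-forced plays -/

inductive Head (V : Type)
  | gen
  | back
  | rw (b : Bool) (p : V)
  | fin

/-- The head reads `v`. During `rw b p`, the cells `pre` have already been rewritten and `p` is the
last of them (or the initial state); during `fin`, `done` has already been emitted. -/
inductive Conf (V : Type)
  | start
  | gen (pre : List V) (v : V)
  | back (pre : List V) (v : V) (suf : List V)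
  | rw (b : Bool) (p : V) (pre : List V) (v : V) (suf : List V)
  | fin (done : List V) (v : V) (suf : List V)
  | term (vs : List V)

inductive Step : Conf G.V → Conf G.V → Prop
  | start_gen {v} : G.E G.init v → Step .start (.gen [] v)
  | start_back {v} : G.E G.init v → G.HasAcceptingSucc v → Step .start (.back [] v [])
  | gen_gen {pre u v} : G.E u v → Step (.gen pre u) (.gen (pre ++ [u]) v)
  | gen_back {pre u v} : G.E u v → G.HasAcceptingSucc v →
      Step (.gen pre u) (.back (pre ++ [u]) v [])
  | back_left {pre u v suf} : Step (.back (pre ++ [u]) v suf) (.back pre u (v :: suf))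
  | back_rw {v suf} (b : Bool) : Step (.back [] v suf) (.rw b G.init [] v suf)
  | back_fin {v suf} : Step (.back [] v suf) (.fin [] v suf)
  | rw_right {b p pre v v' s suf} : G.E p v' → G.βOf b v = G.βOf b v' →
      Step (.rw b p pre v (s :: suf)) (.rw b v' (pre ++ [v']) s suf)
  | rw_back {b p pre v v'} : G.E p v' → G.βOf b v = G.βOf b v' → G.HasFinalSucc v' →
      Step (.rw b p pre v []) (.back pre v' [])
  | fin_right {done v s suf} : Step (.fin done v (s :: suf)) (.fin (done ++ [v]) s suf)
  | fin_term {done v} : Step (.fin done v []) (.term (done ++ [v]))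

def Valid : Conf G.V → Prop
  | .start => True
  | .gen pre v => List.IsChain G.E (G.init :: pre ++ [v])
  | .back pre v suf => G.AcceptedInterior (pre ++ v :: suf)
  | .rw b p pre v suf => List.IsChain G.E (G.init :: pre) ∧ (G.init :: pre).getLast? = some p ∧
      ∃ old, G.AcceptedInterior (old ++ v :: suf) ∧ pre.map (G.βOf b) = old.map (G.βOf b)
  | .fin done v suf => G.AcceptedInterior (done ++ v :: suf)
  | .term vs => G.AcceptedInterior vs

lemma Step.valid {c c' : Conf G.V} (h : G.Step c c') (hc : G.Valid c) : G.Valid c' := by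
  cases h with
  | start_gen hv => simpa [Valid] using hv
  | start_back hv hacc =>
    obtain ⟨f, hvf, hf, hΩ⟩ := hacc
    exact G.acceptedInterior_of_isChain (by simp [hv, hvf]) hf hΩ
  | gen_gen huv =>
    exact List.IsChain.append_singleton hc (List.getLast?_cons_append_singleton ..) huv
  | gen_back huv hacc =>
    obtain ⟨f, hvf, hf, hΩ⟩ := hacc
    refine G.acceptedInterior_of_isChain (f := f) ?_ hf hΩ
    have := (List.IsChain.append_singleton hc (List.getLast?_cons_append_singleton ..)
      huv).append_singleton (List.getLast?_cons_append_singleton ..) hvf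
    simpa using this
  | back_left => simpa [Valid] using hc
  | back_rw b => exact ⟨.singleton _, rfl, [], hc, rfl⟩
  | back_fin => simpa [Valid] using hc
  | rw_right hpv hobs =>
    obtain ⟨hch, hp, old, hold, hmap⟩ := hc
    exact ⟨hch.append_singleton hp hpv, List.getLast?_cons_append_singleton .., old ++ [_],
      by simpa using hold, by simp [hmap, hobs]⟩
  | rw_back hpv hobs hfin =>
    obtain ⟨hch, hp, old, hold, hmap⟩ := hc
    obtain ⟨f, hvf, hf⟩ := hfin
    refine hold.relabel (f := f) (b := ‹_›) ?_ hf (by simp [hmap, hobs])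
    exact (hch.append_singleton hp hpv).append_singleton
      (List.getLast?_cons_append_singleton ..) hvf
  | fin_right => simpa [Valid] using hc
  | fin_term => simpa [Valid] using hc

abbrev Steps : Conf G.V → Conf G.V → Prop := Relation.ReflTransGen G.Step

lemma Steps.valid {c : Conf G.V} (h : G.Steps .start c) : G.Valid c := by
  induction h with
  | refl => trivial
  | tail _ hstep ih => exact hstep.valid G ih

lemma steps_gen {pre : List G.V} {v : G.V} (h : List.IsChain G.E (G.init :: pre ++ [v])) :
    G.Steps .start (.gen pre v) := by
  induction pre using List.reverseRecOn generalizing v with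
  | nil => exact .single (.start_gen (List.isChain_pair.mp h))
  | append_singleton pre u ih =>
    have h' : List.IsChain G.E (G.init :: pre ++ [u]) ∧ G.E u v := by simpa using h
    exact .tail (ih h'.1) (.gen_gen h'.2)

lemma steps_back_of_isChain {pre : List G.V} {v f : G.V}
    (h : List.IsChain G.E (G.init :: pre ++ [v])) (hvf : G.E v f) (hf : G.IsFinal f)
    (hΩ : G.Ω f = {true}) : G.Steps .start (.back pre v []) := by
  rcases pre.eq_nil_or_concat' with rfl | ⟨pre, u, rfl⟩
  · exact .single (.start_back (List.isChain_pair.mp h) ⟨f, hvf, hf, hΩ⟩)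
  · have h' : List.IsChain G.E (G.init :: pre ++ [u]) ∧ G.E u v := by simpa using h
    exact .tail (G.steps_gen h'.1) (.gen_back h'.2 ⟨f, hvf, hf, hΩ⟩)

lemma steps_back_left {pre : List G.V} {v : G.V} {suf : List G.V} {w : G.V} {rest : List G.V}
    (h : pre ++ v :: suf = w :: rest) : G.Steps (.back pre v suf) (.back [] w rest) := by
  induction pre using List.reverseRecOn generalizing v suf with
  | nil =>
    obtain ⟨rfl, rfl⟩ := List.cons.inj h
    exact .refl
  | append_singleton pre u ih => exact .head .back_left (ih (by simpa using h))

lemma steps_rw {b : Bool} {p : G.V} {pre : List G.V} {v : G.V} {suf new : List G.V} {v' : G.V}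
    (hch : List.IsChain G.E (p :: new ++ [v']))
    (hobs : (new ++ [v']).map (G.βOf b) = (v :: suf).map (G.βOf b)) (hv' : G.HasFinalSucc v') :
    G.Steps (.rw b p pre v suf) (.back (pre ++ new) v' []) := by
  induction suf generalizing p pre v new with
  | nil =>
    obtain rfl : new = [] := by simpa using congrArg List.length hobs
    have hobs' : G.βOf b v' = G.βOf b v := by simpa using hobs
    simpa using Relation.ReflTransGen.single
      (Step.rw_back (pre := pre) (List.isChain_pair.mp hch) hobs'.symm hv')
  | cons s suf ih =>
    obtain ⟨n, new, rfl⟩ : ∃ n new', new = n :: new' := List.exists_cons_of_ne_nil (by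
      rintro rfl; simpa using congrArg List.length hobs)
    simp only [List.cons_append, List.map_cons, List.cons.injEq] at hobs
    simp only [List.cons_append, List.isChain_cons_cons] at hch
    have := (ih (pre := pre ++ [n]) hch.2 (by simpa using hobs.2)).head
      (Step.rw_right hch.1 hobs.1.symm)
    simpa using this

lemma steps_fin {done : List G.V} {v : G.V} {suf : List G.V} :
    G.Steps (.fin done v suf) (.term (done ++ v :: suf)) := by
  induction suf generalizing done v with
  | nil => exact .single .fin_term
  | cons s suf ih =>
    have := (ih (done := done ++ [v]) (v := s)).head .fin_right
    simpa using this

lemma IsPlay.exists_isChain {G : CGame Γ} {π : List G.V} (h : G.IsPlay π) {pre : List G.V}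
    {v : G.V} (hi : G.interior π = pre ++ [v]) :
    ∃ f, List.IsChain G.E (G.init :: pre ++ [v]) ∧ G.E v f ∧ G.IsFinal f ∧
      G.OmegaP π = G.Ω f := by
  obtain ⟨f, hπ, hf⟩ := h.exists_eq
  have hch : List.IsChain G.E π := h.2.2.1
  rw [hπ, hi] at hch
  have hch' : List.IsChain G.E (G.init :: pre ++ [v]) ∧ G.E v f := by simpa using hch
  exact ⟨f, hch'.1, hch'.2, hf, by rw [hπ, omegaP_append_singleton]⟩

lemma steps_back_of_acceptForced {π : List G.V} (hacc : G.AcceptForced π)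
    {w : G.V} {rest : List G.V} (h : G.interior π = w :: rest) :
    G.Steps .start (.back [] w rest) := by
  obtain ⟨σ, hσ, hconn, hΩ⟩ := hacc
  induction hconn using Relation.ReflTransGen.head_induction_on generalizing w rest with
  | refl =>
    obtain ⟨pre, v, hpv⟩ := (List.eq_nil_or_concat' (G.interior σ)).resolve_left (by simp [h])
    obtain ⟨f, hch, hvf, hf, hΩf⟩ := hσ.exists_isChain hpv
    exact (G.steps_back_of_isChain hch hvf hf (hΩf ▸ hΩ)).trans
      (G.steps_back_left (hpv.symm.trans h))
  | @head π σ' hstep _ ih =>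
    obtain ⟨b, hπ, hσ', hobs⟩ := G.ind_iff_exists_indBy.mp hstep
    obtain ⟨w', rest', h'⟩ := List.exists_cons_of_ne_nil (l := G.interior σ') (by
      rintro hnil; simpa [h, hnil] using congrArg List.length hobs)
    obtain ⟨new, v', hnew⟩ := (List.eq_nil_or_concat' (G.interior π)).resolve_left (by simp [h])
    obtain ⟨f, hch, hvf, hf, -⟩ := hπ.exists_isChain hnew
    have hrw := G.steps_rw (b := b) (pre := []) hch (by rw [← hnew, hobs, h']) ⟨f, hvf, hf⟩
    exact ((ih h').tail (.back_rw b)).trans (hrw.trans (G.steps_back_left (hnew.symm.trans h)))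

/-! ### The grammar -/

inductive Nonterminal (V : Type)
  | start
  | cell (v : V) (first last : Bool) (head : Option (Head V))

instance {V : Type} [Finite V] : Finite (Head V) :=
  Finite.of_surjective (fun o : Option (Option (Option (Bool × V))) => match o with
      | none => .gen
      | some none => .back
      | some (some none) => .fin
      | some (some (some (b, p))) => .rw b p)
    (by
      rintro (_ | _ | ⟨b, p⟩ | _)
      exacts [⟨none, rfl⟩, ⟨some none, rfl⟩, ⟨some (some (some (b, p))), rfl⟩,
        ⟨some (some none), rfl⟩])

instance {V : Type} [Finite V] : Finite (Nonterminal V) :=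
  Finite.of_surjective (fun o : Option (V × Bool × Bool × Option (Head V)) => match o with
      | none => .start
      | some (v, a, b, h) => .cell v a b h)
    (by rintro (_ | ⟨v, a, b, h⟩); exacts [⟨none, rfl⟩, ⟨some (v, a, b, h), rfl⟩])

instance : Fintype G.V := G.fintypeV

abbrev Sym : Type := Nonterminal G.V ⊕ Γ

abbrev cell (v : G.V) (first last : Bool) (h : Option (Head G.V)) : G.Sym :=
  .inl (.cell v first last h)

/-- The rules simulate the steps of the automaton on cells; the flags of a cell are only checked
where the head must be at an end of the row. -/
inductive Rule : List G.Sym → List G.Sym → Prop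
  | start_gen {v} : G.E G.init v → Rule [.inl .start] [G.cell v true true (some .gen)]
  | start_back {v} : G.E G.init v → G.HasAcceptingSucc v →
      Rule [.inl .start] [G.cell v true true (some .back)]
  | gen_gen {u v a} : G.E u v →
      Rule [G.cell u a true (some .gen)] [G.cell u a false none, G.cell v false true (some .gen)]
  | gen_back {u v a} : G.E u v → G.HasAcceptingSucc v →
      Rule [G.cell u a true (some .gen)] [G.cell u a false none, G.cell v false true (some .back)]
  | back_left {u v a b c d} :
      Rule [G.cell u a b none, G.cell v c d (some .back)]
        [G.cell u a b (some .back), G.cell v c d none]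
  | back_rw {v d} (b : Bool) :
      Rule [G.cell v true d (some .back)] [G.cell v true d (some (.rw b G.init))]
  | back_fin {v d} : Rule [G.cell v true d (some .back)] [G.cell v true d (some .fin)]
  | rw_right {b p v v' s a c d e} : G.E p v' → G.βOf b v = G.βOf b v' →
      Rule [G.cell v a c (some (.rw b p)), G.cell s d e none]
        [G.cell v' a c none, G.cell s d e (some (.rw b v'))]
  | rw_back {b p v v' a} : G.E p v' → G.βOf b v = G.βOf b v' → G.HasFinalSucc v' →
      Rule [G.cell v a true (some (.rw b p))] [G.cell v' a true (some .back)]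
  | fin_right {v s a c d e} :
      Rule [G.cell v a c (some .fin), G.cell s d e none] [.inr (G.β1 v), G.cell s d e (some .fin)]
  | fin_term {v a} : Rule [G.cell v a true (some .fin)] [.inr (G.β1 v)]

def Rules : Set (List G.Sym × List G.Sym) := {p | G.Rule p.1 p.2}

def prefixCells : List G.V → List G.Sym
  | [] => []
  | u :: us => G.cell u true false none :: us.map (G.cell · false false none)

def suffixCells : List G.V → List G.Sym
  | [] => []
  | u :: us => G.cell u false us.isEmpty none :: suffixCells us

def terminals (vs : List G.V) : List G.Sym := vs.map (.inr ∘ G.β1)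

def form : Conf G.V → List G.Sym
  | .start => [.inl .start]
  | .gen pre v => G.prefixCells pre ++ G.cell v pre.isEmpty true (some .gen) :: []
  | .back pre v suf =>
      G.prefixCells pre ++ G.cell v pre.isEmpty suf.isEmpty (some .back) :: G.suffixCells suf
  | .rw b p pre v suf =>
      G.prefixCells pre ++ G.cell v pre.isEmpty suf.isEmpty (some (.rw b p)) :: G.suffixCells suf
  | .fin done v suf =>
      G.terminals done ++ G.cell v done.isEmpty suf.isEmpty (some .fin) :: G.suffixCells suf
  | .term vs => G.terminals vs

lemma prefixCells_concat (pre : List G.V) (u : G.V) :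
    G.prefixCells (pre ++ [u]) = G.prefixCells pre ++ [G.cell u pre.isEmpty false none] := by
  cases pre <;> simp [prefixCells]

lemma Rule.grammarStep {l r : List G.Sym} (h : G.Rule l r) (x y : List G.Sym) :
    GrammarStep G.Rules (x ++ (l ++ y)) (x ++ (r ++ y)) :=
  ⟨x, y, l, r, h, by simp, by simp⟩

lemma Step.grammarStep {c c' : Conf G.V} (h : G.Step c c') :
    GrammarStep G.Rules (G.form c) (G.form c') := by
  cases h <;>
    simp only [form, prefixCells_concat, suffixCells, terminals, List.map_append, List.map_cons,
      List.map_nil, List.isEmpty_cons, List.isEmpty_append_singleton, List.append_assoc,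
      List.cons_append, List.nil_append, Function.comp_apply]
  case start_gen hv => exact (Rule.start_gen hv).grammarStep G [] []
  case start_back hv hacc => exact (Rule.start_back hv hacc).grammarStep G [] []
  case gen_gen huv => exact (Rule.gen_gen huv).grammarStep G _ []
  case gen_back huv hacc => exact (Rule.gen_back huv hacc).grammarStep G _ []
  case back_left => exact Rule.back_left.grammarStep G _ _
  case back_rw b => exact (Rule.back_rw b).grammarStep G [] _
  case back_fin => exact Rule.back_fin.grammarStep G [] _
  case rw_right hpv hobs => exact (Rule.rw_right hpv hobs).grammarStep G _ _
  case rw_back hpv hobs hfin => exact (Rule.rw_back hpv hobs hfin).grammarStep G _ []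
  case fin_right => exact Rule.fin_right.grammarStep G _ _
  case fin_term => exact Rule.fin_term.grammarStep G _ []

def IsPlain : G.Sym → Prop
  | .inl (.cell _ _ _ none) => True
  | .inr _ => True
  | _ => False

lemma isPlain_prefixCells : ∀ {pre : List G.V}, ∀ c ∈ G.prefixCells pre, G.IsPlain c
  | [], _, hc => by simp [prefixCells] at hc
  | u :: us, c, hc => by
    simp only [prefixCells, List.mem_cons, List.mem_map] at hc
    rcases hc with rfl | ⟨u, -, rfl⟩ <;> trivial

lemma isPlain_suffixCells : ∀ {suf : List G.V}, ∀ c ∈ G.suffixCells suf, G.IsPlain c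
  | [], _, hc => by simp [suffixCells] at hc
  | u :: us, c, hc => by
    simp only [suffixCells, List.mem_cons] at hc
    rcases hc with rfl | hc
    exacts [trivial, isPlain_suffixCells c hc]

lemma isPlain_terminals {vs : List G.V} : ∀ c ∈ G.terminals vs, G.IsPlain c := by
  simp only [terminals, List.mem_map]
  rintro _ ⟨v, -, rfl⟩
  trivial

lemma Rule.lhs_shape {l r : List G.Sym} (h : G.Rule l r) :
    (∃ a, l = [a] ∧ ¬ G.IsPlain a) ∨ (∃ a q, l = [a, q] ∧ ¬ G.IsPlain a ∧ G.IsPlain q) ∨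
      (∃ q a, l = [q, a] ∧ G.IsPlain q ∧ ¬ G.IsPlain a) := by
  cases h <;> simp [IsPlain]

lemma grammarStep_headed {L R : List G.Sym} {a : G.Sym} {s : List G.Sym}
    (hL : ∀ c ∈ L, G.IsPlain c) (hR : ∀ c ∈ R, G.IsPlain c)
    (h : GrammarStep G.Rules (L ++ a :: R) s) :
    ∃ r, (G.Rule [a] r ∧ s = L ++ r ++ R) ∨
      (∃ q y, R = q :: y ∧ G.Rule [a, q] r ∧ s = L ++ r ++ y) ∨
      (∃ x q, L = x ++ [q] ∧ G.Rule [q, a] r ∧ s = x ++ r ++ R) := by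
  obtain ⟨x, y, l, r, hr, he, rfl⟩ := h
  refine ⟨r, ?_⟩
  rcases Rule.lhs_shape G hr with ⟨a', rfl, ha'⟩ | ⟨a', q, rfl, ha', -⟩ | ⟨q, a', rfl, -, ha'⟩
  · obtain ⟨rfl, rfl, rfl⟩ :=
      List.eq_of_append_cons_eq_append_cons hL hR ha' (by simpa using he.symm)
    exact .inl ⟨hr, rfl⟩
  · obtain ⟨rfl, rfl, rfl⟩ :=
      List.eq_of_append_cons_eq_append_cons hL hR ha' (by simpa using he.symm)
    exact .inr (.inl ⟨q, y, rfl, hr, by simp⟩)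
  · obtain ⟨rfl, rfl, rfl⟩ :=
      List.eq_of_append_cons_eq_append_cons (x := x ++ [q]) hL hR ha' (by simpa using he.symm)
    exact .inr (.inr ⟨x, q, rfl, hr, by simp⟩)

lemma prefixCells_eq_append_singleton {pre : List G.V} {x : List G.Sym} {q : G.Sym}
    (h : G.prefixCells pre = x ++ [q]) :
    ∃ pre' u, pre = pre' ++ [u] ∧ x = G.prefixCells pre' ∧
      q = G.cell u pre'.isEmpty false none := by
  rcases pre.eq_nil_or_concat' with rfl | ⟨pre', u, rfl⟩
  · simp [prefixCells] at h
  · rw [prefixCells_concat] at h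
    obtain ⟨hx, hq⟩ := List.append_inj' h rfl
    exact ⟨pre', u, rfl, hx.symm, (List.singleton_inj.mp hq).symm⟩

lemma suffixCells_eq_cons {suf : List G.V} {q : G.Sym} {y : List G.Sym}
    (h : G.suffixCells suf = q :: y) :
    ∃ s suf', suf = s :: suf' ∧ q = G.cell s false suf'.isEmpty none ∧ y = G.suffixCells suf' := by
  cases suf with
  | nil => simp [suffixCells] at h
  | cons s suf' =>
    obtain ⟨rfl, rfl⟩ := List.cons.inj h
    exact ⟨s, suf', rfl, rfl, rfl⟩

lemma exists_step_of_grammarStep_start {s : List G.Sym}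
    (h : GrammarStep G.Rules (G.form .start) s) : ∃ c', G.Step .start c' ∧ s = G.form c' := by
  obtain ⟨r, ⟨hr, rfl⟩ | ⟨q, y, hy, -⟩ | ⟨x, q, hx, -⟩⟩ :=
    G.grammarStep_headed (L := []) (R := []) (by simp) (by simp) h
  · cases hr with
    | start_gen hv => exact ⟨_, .start_gen hv, by simp [form, prefixCells]⟩
    | start_back hv hacc => exact ⟨_, .start_back hv hacc, by simp [form, prefixCells, suffixCells]⟩
  · simp at hy
  · simp at hx

lemma exists_step_of_grammarStep_gen {pre : List G.V} {v : G.V} {s : List G.Sym}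
    (h : GrammarStep G.Rules (G.form (.gen pre v)) s) :
    ∃ c', G.Step (.gen pre v) c' ∧ s = G.form c' := by
  rw [form] at h
  generalize ha : pre.isEmpty = a at h
  obtain ⟨r, ⟨hr, rfl⟩ | ⟨q, y, hy, -⟩ | ⟨x, q, -, hr, -⟩⟩ :=
    G.grammarStep_headed G.isPlain_prefixCells (R := []) (by simp) h
  · cases hr with
    | gen_gen huv => exact ⟨_, .gen_gen huv, by simp [form, prefixCells_concat, ha]⟩
    | gen_back huv hacc =>
      exact ⟨_, .gen_back huv hacc, by simp [form, prefixCells_concat, suffixCells, ha]⟩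
  · simp at hy
  · cases hr

lemma exists_step_of_grammarStep_back {pre : List G.V} {v : G.V} {suf : List G.V}
    {s : List G.Sym} (h : GrammarStep G.Rules (G.form (.back pre v suf)) s) :
    ∃ c', G.Step (.back pre v suf) c' ∧ s = G.form c' := by
  rw [form] at h
  generalize ha : pre.isEmpty = a at h
  generalize hd : suf.isEmpty = d at h
  obtain ⟨r, ⟨hr, rfl⟩ | ⟨q, y, -, hr, -⟩ | ⟨x, q, hx, hr, rfl⟩⟩ :=
    G.grammarStep_headed G.isPlain_prefixCells G.isPlain_suffixCells h
  · cases hr with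
    | back_rw b =>
      obtain rfl := List.isEmpty_iff.mp ha
      exact ⟨_, .back_rw b, by simp [form, hd]⟩
    | back_fin =>
      obtain rfl := List.isEmpty_iff.mp ha
      exact ⟨_, .back_fin, by simp [form, hd, prefixCells, terminals]⟩
  · cases hr
  · cases hr
    obtain ⟨pre, u, rfl, rfl, hq⟩ := G.prefixCells_eq_append_singleton hx
    simp only [Sum.inl.injEq, Nonterminal.cell.injEq] at hq
    obtain ⟨rfl, rfl, rfl, -⟩ := hq
    exact ⟨_, .back_left, by simp [form, suffixCells, ← ha, hd]⟩

lemma exists_step_of_grammarStep_rw {b : Bool} {p : G.V} {pre : List G.V} {v : G.V}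
    {suf : List G.V} {s : List G.Sym} (h : GrammarStep G.Rules (G.form (.rw b p pre v suf)) s) :
    ∃ c', G.Step (.rw b p pre v suf) c' ∧ s = G.form c' := by
  rw [form] at h
  generalize ha : pre.isEmpty = a at h
  generalize hd : suf.isEmpty = d at h
  obtain ⟨r, ⟨hr, rfl⟩ | ⟨q, y, hy, hr, rfl⟩ | ⟨x, q, -, hr, -⟩⟩ :=
    G.grammarStep_headed G.isPlain_prefixCells G.isPlain_suffixCells h
  · cases hr with
    | rw_back hpv hobs hfin =>
      obtain rfl := List.isEmpty_iff.mp hd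
      exact ⟨_, .rw_back hpv hobs hfin, by simp [form, ha, suffixCells]⟩
  · cases hr with
    | rw_right hpv hobs =>
      obtain ⟨s, suf, rfl, hq, rfl⟩ := G.suffixCells_eq_cons hy
      simp only [Sum.inl.injEq, Nonterminal.cell.injEq] at hq
      obtain ⟨rfl, rfl, rfl, -⟩ := hq
      exact ⟨_, .rw_right hpv hobs, by simp [form, prefixCells_concat, ← ha, ← hd]⟩
  · cases hr

lemma exists_step_of_grammarStep_fin {done : List G.V} {v : G.V} {suf : List G.V}
    {s : List G.Sym} (h : GrammarStep G.Rules (G.form (.fin done v suf)) s) :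
    ∃ c', G.Step (.fin done v suf) c' ∧ s = G.form c' := by
  rw [form] at h
  generalize ha : done.isEmpty = a at h
  generalize hd : suf.isEmpty = d at h
  obtain ⟨r, ⟨hr, rfl⟩ | ⟨q, y, hy, hr, rfl⟩ | ⟨x, q, -, hr, -⟩⟩ :=
    G.grammarStep_headed G.isPlain_terminals G.isPlain_suffixCells h
  · cases hr with
    | fin_term =>
      obtain rfl := List.isEmpty_iff.mp hd
      exact ⟨_, .fin_term, by simp [form, terminals, suffixCells]⟩
  · cases hr with
    | fin_right =>
      obtain ⟨s, suf, rfl, hq, rfl⟩ := G.suffixCells_eq_cons hy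
      simp only [Sum.inl.injEq, Nonterminal.cell.injEq] at hq
      obtain ⟨rfl, rfl, rfl, -⟩ := hq
      exact ⟨_, .fin_right, by simp [form, terminals]⟩
  · cases hr

lemma not_grammarStep_term {vs : List G.V} {s : List G.Sym} :
    ¬ GrammarStep G.Rules (G.form (.term vs)) s := by
  rintro ⟨x, y, l, r, hr, he, -⟩
  obtain ⟨a, ha, hna⟩ : ∃ a ∈ l, ¬ G.IsPlain a := by
    rcases Rule.lhs_shape G hr with ⟨a, rfl, ha⟩ | ⟨a, q, rfl, ha, -⟩ | ⟨q, a, rfl, -, ha⟩ <;>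
    exact ⟨a, by simp, ha⟩
  rw [form] at he
  exact hna (G.isPlain_terminals a (by rw [he]; simp [ha]))

lemma exists_step_of_grammarStep {c : Conf G.V} {s : List G.Sym}
    (h : GrammarStep G.Rules (G.form c) s) : ∃ c', G.Step c c' ∧ s = G.form c' := by
  cases c with
  | start => exact G.exists_step_of_grammarStep_start h
  | gen => exact G.exists_step_of_grammarStep_gen h
  | back => exact G.exists_step_of_grammarStep_back h
  | rw => exact G.exists_step_of_grammarStep_rw h
  | fin => exact G.exists_step_of_grammarStep_fin h
  | term => exact absurd h G.not_grammarStep_term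

lemma rules_finite [Finite Γ] : G.Rules.Finite := by
  refine ((List.finite_length_le G.Sym 2).prod (List.finite_length_le G.Sym 2)).subset ?_
  rintro ⟨l, r⟩ (h : G.Rule l r)
  cases h <;> simp

lemma rules_noncontracting : ∀ p ∈ G.Rules, p.1 ≠ [] ∧ p.1.length ≤ p.2.length ∧
    ∃ x ∈ p.1, ∃ n : Nonterminal G.V, x = Sum.inl n := by
  rintro ⟨l, r⟩ (h : G.Rule l r)
  cases h <;> simp

lemma exists_steps_of_derives {s : List G.Sym}
    (h : Relation.ReflTransGen (GrammarStep G.Rules) (G.form .start) s) :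
    ∃ c, G.Steps .start c ∧ s = G.form c := by
  induction h with
  | refl => exact ⟨_, .refl, rfl⟩
  | tail _ hstep ih =>
    obtain ⟨c, hc, rfl⟩ := ih
    obtain ⟨c', hcc', rfl⟩ := G.exists_step_of_grammarStep hstep
    exact ⟨c', hc.tail hcc', rfl⟩

lemma Steps.derives {c c' : Conf G.V} (h : G.Steps c c') :
    Relation.ReflTransGen (GrammarStep G.Rules) (G.form c) (G.form c') :=
  h.lift G.form fun _ _ hstep => hstep.grammarStep G

lemma form_term (vs : List G.V) : G.form (.term vs) = (vs.map G.β1).map Sum.inr := by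
  simp [form, terminals]

lemma exists_eq_term_of_form_eq {c : Conf G.V} {w : List Γ} (h : G.form c = w.map Sum.inr) :
    ∃ vs, c = .term vs := by
  have hinl : ∀ n, Sum.inl n ∉ G.form c := by simp [h]
  cases c with
  | term vs => exact ⟨vs, rfl⟩
  | start => exact absurd (List.mem_singleton_self _) (hinl _)
  | _ => exact absurd (List.mem_append_right _ List.mem_cons_self) (hinl _)

lemma derives_of_acceptForced {π : List G.V} (hacc : G.AcceptForced π)
    (hne : G.obs1 π ≠ []) :
    Relation.ReflTransGen (GrammarStep G.Rules) [.inl .start] ((G.obs1 π).map Sum.inr) := by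
  obtain ⟨w, rest, h⟩ := List.exists_cons_of_ne_nil (l := G.interior π) (by
    rintro hnil; exact hne (by rw [obs1_eq, hnil, List.map_nil]))
  have := ((G.steps_back_of_acceptForced hacc h).tail .back_fin).trans G.steps_fin
  simpa [form, terminals, obs1_eq, h] using Steps.derives G this

lemma acceptForced_of_derives {w : List Γ}
    (h : Relation.ReflTransGen (GrammarStep G.Rules) [.inl .start] (w.map Sum.inr)) :
    ∃ π, G.IsPlay π ∧ G.obs1 π = w ∧ G.AcceptForced π := by
  obtain ⟨c, hc, he⟩ := G.exists_steps_of_derives h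
  obtain ⟨vs, rfl⟩ := G.exists_eq_term_of_form_eq he.symm
  obtain ⟨π, hπ, hint, hacc⟩ := hc.valid G
  rw [form_term] at he
  exact ⟨π, hπ, by rw [obs1_eq, hint, List.map_injective_iff.mpr Sum.inr_injective he],
    hacc⟩

lemma contextSensitive_acceptStrategy [Finite Γ] :
    ContextSensitive {w | G.acceptStrategy G.obs1 w = true} := by
  refine ⟨Nonterminal G.V, inferInstance, .start, G.Rules, G.rules_finite, G.rules_noncontracting,
    fun w hw => ?_⟩
  simp only [Set.mem_ofPred_eq, acceptStrategy, decide_eq_true_eq]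
  refine ⟨?_, G.acceptForced_of_derives⟩
  rintro ⟨π, -, rfl, hacc⟩
  exact G.derives_of_acceptForced hacc hw

end CGame

/-- Every solvable consensus game acceptor admits a winning
strategy implementable by a nondeterministic linear-bounded automaton, i.e.
(by Kuroda's theorem) a winning observation-based strategy whose language of
accepted observation sequences is context-sensitive. -/
theorem solvable_admits_contextSensitive_strategy {Γ : Type} [Finite Γ]
    (G : CGame Γ) (h : G.Solvable) :
    ∃ t : List Γ → Bool, G.ObsWinning t ∧ ContextSensitive {w | t w = true} :=
  ⟨G.acceptStrategy G.obs1, G.acceptStrategy_obsWinning h, G.contextSensitive_acceptStrategy⟩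
end

section
/- For every consensus game acceptor, the seed languages L_acc and L_rej are regular, and the seed relation R is recognised by a synchronous (letter-to-letter) transducer. -/
/-! ## Synchronous (letter-to-letter) transducers and regular languages. -/

/-- A synchronous transducer: a finite two-tape automaton whose transitions are
labelled by pairs of letters. -/
structure Transducer (Γ : Type) where
  Q : Type
  fintypeQ : Fintype Q
  q0 : Q
  F : Set Q
  Δ : Q → Γ → Γ → Q → Prop

namespace Transducer

/-- Runs of a transducer. -/
inductive Run {Γ : Type} (T : Transducer Γ) : T.Q → List Γ → List Γ → T.Q → Prop
  | nil (q : T.Q) : Run T q [] [] q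
  | cons {p q r : T.Q} {a b : Γ} {u w : List Γ} :
      T.Δ p a b q → Run T q u w r → Run T p (a :: u) (b :: w) r

/-- The synchronous relation recognised by a transducer. -/
def rel {Γ : Type} (T : Transducer Γ) : Set (List Γ × List Γ) :=
  {p | ∃ qf ∈ T.F, T.Run T.q0 p.1 p.2 qf}

end Transducer

/-- A language is regular if it is accepted by a finite DFA. -/
def RegularSet {Γ : Type} (L : Set (List Γ)) : Prop :=
  ∃ (Q : Type) (_ : Fintype Q) (M : DFA Γ Q), M.accepts = L

/-! The vertex visited last is all the memory needed to check that a sequence of vertices is a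
path of the game. Reading the two observations of each interior vertex in lockstep therefore gives
a synchronous transducer for the seed relation, whose acceptance condition may moreover inspect the
decisions admissible at the final vertex. Erasing the second tape of a synchronous transducer
leaves an NFA, so `L_acc` and `L_rej` are regular. -/

namespace Transducer

variable {Γ : Type} (T : Transducer Γ)

variable {T} in
lemma run_nil_left_iff {p r : T.Q} {w : List Γ} : T.Run p [] w r ↔ w = [] ∧ p = r := by
  constructor
  · rintro ⟨⟩
    exact ⟨rfl, rfl⟩
  · rintro ⟨rfl, rfl⟩
    exact .nil p

variable {T} in
lemma run_cons_left_iff {p r : T.Q} {a : Γ} {u w : List Γ} :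
    T.Run p (a :: u) w r ↔ ∃ b w' q, w = b :: w' ∧ T.Δ p a b q ∧ T.Run q u w' r := by
  constructor
  · rintro (_ | ⟨hΔ, hrun⟩)
    exact ⟨_, _, _, rfl, hΔ, hrun⟩
  · rintro ⟨b, w', q, rfl, hΔ, hrun⟩
    exact .cons hΔ hrun

def fstNFA : NFA Γ T.Q where
  step p a := {q | ∃ b, T.Δ p a b q}
  start := {T.q0}
  accept := T.F

variable {T} in
lemma mem_evalFrom_fstNFA_iff {S : Set T.Q} {u : List Γ} {r : T.Q} :
    r ∈ T.fstNFA.evalFrom S u ↔ ∃ p ∈ S, ∃ w, T.Run p u w r := by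
  induction u generalizing S with
  | nil => simp [run_nil_left_iff]
  | cons a u ih =>
    simp only [NFA.evalFrom_cons, ih, NFA.mem_stepSet, run_cons_left_iff]
    constructor
    · rintro ⟨q, ⟨p, hp, b, hΔ⟩, w, hrun⟩
      exact ⟨p, hp, b :: w, b, w, q, rfl, hΔ, hrun⟩
    · rintro ⟨p, hp, _, b, w, q, rfl, hΔ, hrun⟩
      exact ⟨q, ⟨p, hp, b, hΔ⟩, w, hrun⟩

lemma fstNFA_accepts : T.fstNFA.accepts = Prod.fst '' T.rel := by
  ext u
  simp only [NFA.mem_accepts, mem_evalFrom_fstNFA_iff]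
  constructor
  · rintro ⟨r, hr, _, rfl, w, hrun⟩
    exact ⟨(u, w), ⟨r, hr, hrun⟩, rfl⟩
  · rintro ⟨⟨u, w⟩, ⟨r, hr, hrun⟩, rfl⟩
    exact ⟨r, hr, T.q0, rfl, w, hrun⟩

theorem regularSet_image_fst_rel : RegularSet (Prod.fst '' T.rel) :=
  have := T.fintypeQ
  ⟨Set T.Q, Fintype.ofFinite _, T.fstNFA.toDFA, by rw [NFA.toDFA_correct, fstNFA_accepts]⟩

end Transducer

namespace CGame

variable {Γ : Type} (G : CGame Γ)

section Plays

variable {G}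

@[simp] lemma obs1_cons_append (v f : G.V) (l : List G.V) :
    G.obs1 (v :: (l ++ [f])) = l.map G.β1 := by
  simp [obs1]

@[simp] lemma obs2_cons_append (v f : G.V) (l : List G.V) :
    G.obs2 (v :: (l ++ [f])) = l.map G.β2 := by
  simp [obs2]

@[simp] lemma omegaP_cons_append (v f : G.V) (l : List G.V) :
    G.OmegaP (v :: (l ++ [f])) = G.Ω f := by
  ext a
  simp [OmegaP, List.getLast?_cons]

lemma isPlay_init_cons_append_iff {l : List G.V} {f : G.V} :
    G.IsPlay (G.init :: (l ++ [f])) ↔ List.IsChain G.E (G.init :: (l ++ [f])) ∧ G.IsFinal f := by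
  have hlast : (G.init :: (l ++ [f])).getLast? = some f := by simp [List.getLast?_cons]
  exact ⟨fun ⟨_, _, hchain, hfinal⟩ => ⟨hchain, hfinal f hlast⟩,
    fun ⟨hchain, hf⟩ => ⟨by simp, rfl, hchain, by simpa [hlast] using hf⟩⟩

lemma IsPlay.exists_eq_init_cons_append {π : List G.V} (h : G.IsPlay π) :
    ∃ l f, π = G.init :: (l ++ [f]) := by
  obtain ⟨hlen, hhead, -, -⟩ := h
  rcases π with _ | ⟨v, rest⟩
  · simp at hlen
  obtain rfl : v = G.init := by simpa using hhead
  rcases rest.eq_nil_or_concat with rfl | ⟨l, f, rfl⟩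
  · simp at hlen
  · exact ⟨l, f, by simp⟩

end Plays

/-- The state is the vertex last visited; the final vertex of a play is not read but guessed by
the acceptance condition, which also tests its decision set against `P`. -/
abbrev seedTransducer (P : Set Bool → Prop) : Transducer Γ where
  Q := G.V
  fintypeQ := G.fintypeV
  q0 := G.init
  F := {u | ∃ f, G.E u f ∧ G.IsFinal f ∧ P (G.Ω f)}
  Δ u a b v := G.E u v ∧ G.β1 v = a ∧ G.β2 v = b

lemma exists_run_seedTransducer_iff (P : Set Bool → Prop) (u : G.V) (w₁ w₂ : List Γ) :
    (∃ r ∈ (G.seedTransducer P).F, (G.seedTransducer P).Run u w₁ w₂ r) ↔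
      ∃ l f, List.IsChain G.E (u :: (l ++ [f])) ∧ G.IsFinal f ∧ P (G.Ω f) ∧
        w₁ = l.map G.β1 ∧ w₂ = l.map G.β2 := by
  induction w₁ generalizing u w₂ with
  | nil =>
    simp only [Transducer.run_nil_left_iff]
    constructor
    · rintro ⟨_, ⟨f, hE, hf, hP⟩, rfl, rfl⟩
      exact ⟨[], f, by simpa using hE, hf, hP, rfl, rfl⟩
    · rintro ⟨_ | ⟨v, l⟩, f, hchain, hf, hP, hw₁, rfl⟩
      · exact ⟨u, ⟨f, by simpa using hchain, hf, hP⟩, rfl, rfl⟩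
      · simp at hw₁
  | cons a w₁ ih =>
    simp only [Transducer.run_cons_left_iff]
    constructor
    · rintro ⟨r, hr, b, w', q, rfl, ⟨hE, rfl, rfl⟩, hrun⟩
      obtain ⟨l, f, hchain, hf, hP, rfl, rfl⟩ := (ih q w').1 ⟨r, hr, hrun⟩
      exact ⟨q :: l, f, hchain.cons_cons hE, hf, hP, rfl, rfl⟩
    · rintro ⟨_ | ⟨q, l⟩, f, hchain, hf, hP, hw₁, rfl⟩
      · simp at hw₁
      · obtain ⟨rfl, rfl⟩ := List.cons_eq_cons.1 hw₁
        obtain ⟨hE, hchain⟩ := List.isChain_cons_cons.1 hchain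
        obtain ⟨r, hr, hrun⟩ := (ih q _).2 ⟨l, f, hchain, hf, hP, rfl, rfl⟩
        exact ⟨r, hr, _, _, q, rfl, ⟨hE, rfl, rfl⟩, hrun⟩

lemma seedTransducer_rel (P : Set Bool → Prop) :
    (G.seedTransducer P).rel =
      {p | ∃ π, G.IsPlay π ∧ p.1 = G.obs1 π ∧ p.2 = G.obs2 π ∧ P (G.OmegaP π)} := by
  ext ⟨w₁, w₂⟩
  refine (G.exists_run_seedTransducer_iff P G.init w₁ w₂).trans ⟨?_, ?_⟩
  · rintro ⟨l, f, hchain, hfinal, hP, rfl, rfl⟩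
    exact ⟨_, isPlay_init_cons_append_iff.2 ⟨hchain, hfinal⟩, by simp, by simp, by simpa using hP⟩
  · rintro ⟨π, hπ, rfl, rfl, hP⟩
    obtain ⟨l, f, rfl⟩ := hπ.exists_eq_init_cons_append
    obtain ⟨hchain, hfinal⟩ := isPlay_init_cons_append_iff.1 hπ
    exact ⟨l, f, hchain, hfinal, by simpa using hP, by simp, by simp⟩

lemma regularSet_obs1_omegaP_eq (D : Set Bool) :
    RegularSet {w | ∃ π, G.IsPlay π ∧ G.obs1 π = w ∧ G.OmegaP π = D} := by
  convert (G.seedTransducer (· = D)).regularSet_image_fst_rel using 1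
  ext w
  simp [seedTransducer_rel, eq_comm]

end CGame

/-- For every consensus game, the seed languages `L_acc` and
`L_rej` are regular and the seed relation is recognised by a synchronous
transducer. -/
theorem seed_regular_and_synchronous {Γ : Type} (G : CGame Γ) :
    RegularSet G.LaccSet ∧ RegularSet G.LrejSet ∧
      ∃ T : Transducer Γ, T.rel = G.seedRel :=
  ⟨G.regularSet_obs1_omegaP_eq {true}, G.regularSet_obs1_omegaP_eq {false},
    G.seedTransducer fun _ => True, by simp [CGame.seedTransducer_rel, CGame.seedRel]⟩
end

section
/- For a consensus game G with seed relation R and reflection τ := R R⁻¹, (i) τ = {(β¹(π), β¹(π')) : plays π ~² π'}, and (ii) τ* = (∩Γ*) ∪ {(β¹(π), β¹(π')) : plays π ~* π'}. -/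
/-! ## Operations on word relations. -/

/-- Composition of word relations. -/
def RelComp {α : Type} (S S' : Set (List α × List α)) : Set (List α × List α) :=
  {p | ∃ z, (p.1, z) ∈ S ∧ (z, p.2) ∈ S'}

/-- Inverse of a word relation. -/
def RelInv {α : Type} (S : Set (List α × List α)) : Set (List α × List α) :=
  {p | (p.2, p.1) ∈ S}

/-- Reflexive-transitive iteration `S*` of a word relation. -/
def RelStar {α : Type} (S : Set (List α × List α)) : Set (List α × List α) :=
  {p | Relation.ReflTransGen (fun x y => (x, y) ∈ S) p.1 p.2}

/-- Image `S L = { x | (x,y) ∈ S for some y ∈ L }`. -/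
def RelImage {α : Type} (S : Set (List α × List α)) (L : Set (List α)) : Set (List α) :=
  {x | ∃ y, (x, y) ∈ S ∧ y ∈ L}

/-- Reflection `τ(R) := R R⁻¹`. -/
def Reflection {α : Type} (S : Set (List α × List α)) : Set (List α × List α) :=
  RelComp S (RelInv S)

/-! A `τ`-step is a `∼²`-step between plays, seen through `β¹`. Two consecutive `τ`-steps meet
at a common `β¹`-observation, that is, at a `∼¹`-step between the plays realising them; hence
`τ`-chains are exactly the `β¹`-images of `∼*`-chains, apart from the empty chain. -/

namespace Relation

variable {α β : Type*} {r s : α → α → Prop} {f : α → β}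

theorem ReflTransGen.map {a b : α} (h : ReflTransGen s a b)
    (hs : ∀ a b, s a b → f a = f b ∨ r a b) :
    ReflTransGen (Relation.Map r f f) (f a) (f b) :=
  h.lift' f fun a b hab => (hs a b hab).elim
    (fun he => show ReflTransGen _ (f a) (f b) from he ▸ .refl)
    (fun hr => .single ⟨a, b, hr, rfl, rfl⟩)

theorem ReflTransGen.eq_or_exists_of_map {P : α → Prop} (hr : ∀ a b, r a b → P a ∧ P b)
    {x y : β} (h : ReflTransGen (Relation.Map r f f) x y) :
    x = y ∨ ∃ a b, P a ∧ P b ∧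
      ReflTransGen (fun a b => (P a ∧ P b ∧ f a = f b) ∨ r a b) a b ∧ x = f a ∧ y = f b := by
  induction h with
  | refl => exact .inl rfl
  | tail _ hyz ih =>
    obtain ⟨c, d, hcd, rfl, rfl⟩ := hyz
    obtain ⟨hc, hd⟩ := hr c d hcd
    rcases ih with rfl | ⟨a, b, ha, hb, hab, rfl, hbc⟩
    · exact .inr ⟨c, d, hc, hd, .single (.inr hcd), rfl, rfl⟩
    · exact .inr ⟨a, d, ha, hd, (hab.tail (.inl ⟨hb, hc, hbc.symm⟩)).tail (.inr hcd), rfl, rfl⟩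

end Relation

namespace CGame

variable {Γ : Type} (G : CGame Γ)

theorem mem_reflection_seedRel_iff {x y : List Γ} :
    (x, y) ∈ Reflection G.seedRel ↔ Relation.Map G.Ind2 G.obs1 G.obs1 x y := by
  constructor
  · rintro ⟨z, ⟨π, hπ, rfl, rfl⟩, ⟨π', hπ', rfl, hz⟩⟩
    exact ⟨π, π', ⟨hπ, hπ', hz⟩, rfl, rfl⟩
  · rintro ⟨π, π', ⟨hπ, hπ', hobs⟩, rfl, rfl⟩
    exact ⟨G.obs2 π, ⟨π, hπ, rfl, rfl⟩, ⟨π', hπ', rfl, hobs⟩⟩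

end CGame

/-- For the seed relation `R` of a game and its reflection
`τ = R R⁻¹`: (i) `τ` relates exactly the player-1 observations of plays
indistinguishable to player 2, and (ii) `τ*` is the identity together with the
pairs of player-1 observations of connected plays. -/
theorem reflection_characterisation {Γ : Type} (G : CGame Γ) :
    Reflection G.seedRel =
        {p | ∃ π π', G.Ind2 π π' ∧ p.1 = G.obs1 π ∧ p.2 = G.obs1 π'} ∧
      RelStar (Reflection G.seedRel) =
        {p : List Γ × List Γ | p.1 = p.2} ∪
          {p | ∃ π π', G.IsPlay π ∧ G.IsPlay π' ∧ G.Connected π π' ∧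
            p.1 = G.obs1 π ∧ p.2 = G.obs1 π'} := by
  have hτ : (fun x y => (x, y) ∈ Reflection G.seedRel) = Relation.Map G.Ind2 G.obs1 G.obs1 := by
    ext x y
    exact G.mem_reflection_seedRel_iff
  refine ⟨?_, ?_⟩
  · ext ⟨x, y⟩
    simp only [G.mem_reflection_seedRel_iff, Relation.Map, Set.mem_ofPred_eq, eq_comm]
  · ext ⟨x, y⟩
    simp only [RelStar, hτ, Set.mem_union, Set.mem_ofPred_eq]
    constructor
    · exact Relation.ReflTransGen.eq_or_exists_of_map fun _ _ h => ⟨h.1, h.2.1⟩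
    · rintro (rfl | ⟨π, π', -, -, hconn, rfl, rfl⟩)
      · exact .refl
      · exact hconn.map fun _ _ h => h.imp (fun h1 => h1.2.2) id
end
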